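/- arXiv:2312.14362 — 2 statements merged into one kernel-verified Lean document; each statement's English description precedes it below -/
import Mathlib

section
/- Let 𝕂 = {x ∈ ℓ² : xᵢ ≥ 0 for all i ∈ ℕ} be the positive cone in ℓ² with metric projection P_𝕂, and let x ∈ ℓ² satisfy xᵢ < 0 for all i ∈ ℕ. Then P_𝕂 is not Fréchet differentiable at x; that is, there is no continuous linear map A : ℓ² → ℓ² such that (P_𝕂(u) − P_𝕂(x) − A(u − x))/‖u − x‖ → 0 as u → x. -/
open Filter Topology Set

/-!
The projection onto the positive cone acts coordinatewise as `t ↦ max t 0`. Since `x ∈ ℓ²`, its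
coordinates `x n < 0` tend to `0`, so both `x - x n • eₙ` and `x - 2 x n • eₙ` tend to `x`. The
first has coordinate `0` at `n`, at the kink of `max · 0`, and projects to `0 = P x`; the second
projects to `-x n • eₙ`. For any candidate derivative `A` the two difference quotients are
`-A eₙ` and `eₙ / 2 - A eₙ`, whose difference `eₙ / 2` has norm `1 / 2`.
-/

open scoped lp ENNReal

theorem abs_sub_max_zero_lt_abs_sub {a w : ℝ} (hw : 0 ≤ w) (hne : w ≠ max a 0) :
    |a - max a 0| < |a - w| := by
  rcases le_or_gt a 0 with ha | ha
  · rw [max_eq_right ha] at hne ⊢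
    rw [sub_zero, abs_of_nonpos ha, abs_of_neg (by linarith [hne.symm.lt_of_le hw])]
    linarith [hne.symm.lt_of_le hw]
  · rw [max_eq_left ha.le, sub_self, abs_zero]
    exact abs_pos.mpr (sub_ne_zero.mpr (Ne.symm (max_eq_left ha.le ▸ hne)))

theorem abs_sub_max_zero_le_abs_sub {a w : ℝ} (hw : 0 ≤ w) : |a - max a 0| ≤ |a - w| := by
  rcases eq_or_ne w (max a 0) with rfl | hne
  · rfl
  · exact (abs_sub_max_zero_lt_abs_sub hw hne).le

namespace lp

variable {α : Type*} {E : α → Type*} [∀ i, NormedAddCommGroup (E i)] {p : ℝ≥0∞}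

theorem norm_lt_norm_of_forall_le_of_lt (hp : 0 < p.toReal) {f g : lp E p}
    (h : ∀ i, ‖f i‖ ≤ ‖g i‖) {j : α} (hj : ‖f j‖ < ‖g j‖) : ‖f‖ < ‖g‖ := by
  have hpow : ‖f‖ ^ p.toReal < ‖g‖ ^ p.toReal := by
    rw [norm_rpow_eq_tsum hp, norm_rpow_eq_tsum hp]
    exact Summable.tsum_lt_tsum (fun i => by gcongr; exact h i) (by gcongr)
      ((lp.memℓp f).summable hp) ((lp.memℓp g).summable hp)
  exact (Real.rpow_lt_rpow_iff (norm_nonneg' _) (norm_nonneg' _) hp).mp hpow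

theorem tendsto_norm_apply_cofinite_zero (hp : 0 < p.toReal) (f : lp E p) :
    Tendsto (fun i => ‖f i‖) cofinite (𝓝 0) := by
  have hpow := ((lp.memℓp f).summable hp).tendsto_cofinite_zero
  have hroot := (Real.continuousAt_rpow_const 0 p.toReal⁻¹
    (Or.inr (inv_nonneg.mpr hp.le))).tendsto.comp hpow
  rw [Real.zero_rpow (inv_ne_zero hp.ne')] at hroot
  exact hroot.congr fun i => Real.rpow_rpow_inv (norm_nonneg _) hp.ne'

theorem eq_of_norm_sub_le_of_apply_eq_max {ι : Type*} (hp : 0 < p.toReal)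
    {u q z : lp (fun _ : ι => ℝ) p} (hq : ∀ i, 0 ≤ q i) (hz : ∀ i, z i = max (u i) 0)
    (hmin : ‖u - q‖ ≤ ‖u - z‖) : q = z := by
  by_contra hne
  obtain ⟨j, hj⟩ : ∃ j, q j ≠ z j := by
    by_contra! h
    exact hne (lp.ext (funext h))
  refine hmin.not_gt (norm_lt_norm_of_forall_le_of_lt hp (fun i => ?_) (j := j) ?_)
  · simpa only [coeFn_sub, Pi.sub_apply, hz, Real.norm_eq_abs] using
      abs_sub_max_zero_le_abs_sub (hq i)
  · simpa only [coeFn_sub, Pi.sub_apply, hz, Real.norm_eq_abs] using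
      abs_sub_max_zero_lt_abs_sub (hq j) (hz j ▸ hj)

end lp

section PosConeProjection

variable {ι : Type*} {p : ℝ≥0∞}

def IsPosConeProjection (P : lp (fun _ : ι => ℝ) p → lp (fun _ : ι => ℝ) p) : Prop :=
  ∀ x, (∀ i, 0 ≤ P x i) ∧
    ∀ z : lp (fun _ : ι => ℝ) p, (∀ i, 0 ≤ z i) → ‖x - P x‖ ≤ ‖x - z‖

namespace IsPosConeProjection

variable {P : lp (fun _ : ι => ℝ) p → lp (fun _ : ι => ℝ) p}

theorem eq_of_apply_eq_max (hP : IsPosConeProjection P) (hp : 0 < p.toReal)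
    {u z : lp (fun _ : ι => ℝ) p} (hz : ∀ i, z i = max (u i) 0) : P u = z :=
  lp.eq_of_norm_sub_le_of_apply_eq_max hp (hP u).1 hz
    ((hP u).2 z fun i => hz i ▸ le_max_right _ _)

theorem eq_zero_of_nonpos (hP : IsPosConeProjection P) (hp : 0 < p.toReal)
    {x : lp (fun _ : ι => ℝ) p} (hx : ∀ i, x i ≤ 0) : P x = 0 :=
  hP.eq_of_apply_eq_max hp fun i => by simp [max_eq_right (hx i)]

theorem add_smul_single_one [DecidableEq ι] (hP : IsPosConeProjection P) (hp : 0 < p.toReal)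
    {x : lp (fun _ : ι => ℝ) p} (hx : ∀ i, x i ≤ 0) (n : ι) (r : ℝ) :
    P (x + r • lp.single p n 1) = max (x n + r) 0 • lp.single p n 1 := by
  refine hP.eq_of_apply_eq_max hp fun i => ?_
  simp only [lp.coeFn_add, lp.coeFn_smul, Pi.add_apply, Pi.smul_apply, lp.single_apply]
  rcases eq_or_ne i n with rfl | hi
  · simp
  · simp [hi, max_eq_right (hx i)]

end IsPosConeProjection

end PosConeProjection

theorem tendsto_add_smul_single_one_nhdsNE {p : ℝ≥0∞} [Fact (1 ≤ p)] (hp : 0 < p.toReal)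
    {x : lp (fun _ : ℕ => ℝ) p} (hx : ∀ n, x n ≠ 0) {c : ℝ} (hc : c ≠ 0) :
    Tendsto (fun n => x + (c * x n) • lp.single p n 1) atTop (𝓝[≠] x) := by
  have hnorm : ∀ n, ‖x + (c * x n) • lp.single p n (1 : ℝ) - x‖ = |c| * ‖x n‖ := by
    intro n
    rw [add_sub_cancel_left, norm_smul, lp.norm_single (zero_lt_one.trans_le Fact.out),
      norm_one, mul_one, norm_mul, Real.norm_eq_abs]
  refine tendsto_nhdsWithin_iff.mpr ⟨?_, Eventually.of_forall fun n => ?_⟩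
  · rw [tendsto_iff_norm_sub_tendsto_zero]
    simpa only [hnorm, mul_zero, Nat.cofinite_eq_atTop] using
      (lp.tendsto_norm_apply_cofinite_zero hp x).const_mul |c|
  · rw [mem_compl_singleton_iff, ← sub_ne_zero, ← norm_ne_zero_iff, hnorm]
    exact mul_ne_zero (abs_ne_zero.mpr hc) (norm_ne_zero_iff.mpr (hx n))

/-- The metric projection `P` onto the positive cone `𝕂` of `ℓ²` is not Fréchet
differentiable at any point `x` with all coordinates strictly negative. -/
theorem not_frechet_proj_positiveCone_lp2_neg
    (P : lp (fun _ : ℕ => ℝ) 2 → lp (fun _ : ℕ => ℝ) 2)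
    (hP : ∀ x, (∀ i : ℕ, 0 ≤ P x i) ∧
      ∀ z : lp (fun _ : ℕ => ℝ) 2, (∀ i : ℕ, 0 ≤ z i) → ‖x - P x‖ ≤ ‖x - z‖)
    (x : lp (fun _ : ℕ => ℝ) 2) (hx : ∀ i : ℕ, x i < 0) :
    ¬ ∃ A : lp (fun _ : ℕ => ℝ) 2 →L[ℝ] lp (fun _ : ℕ => ℝ) 2,
      Filter.Tendsto (fun u => ‖u - x‖⁻¹ • (P u - P x - A (u - x)))
        (𝓝[≠] x) (𝓝 0) := by
  rintro ⟨A, hA⟩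
  have hp : 0 < (2 : ℝ≥0∞).toReal := by norm_num
  have hP' : IsPosConeProjection P := hP
  have hx_nonpos : ∀ i, x i ≤ 0 := fun i => (hx i).le
  set e : ℕ → ℓ²(ℕ, ℝ) := fun n => lp.single 2 n 1 with he
  set quot := fun u => ‖u - x‖⁻¹ • (P u - P x - A (u - x)) with hquot
  have hquot_sub : ∀ n, quot (x + (-2 * x n) • e n) - quot (x + (-1 * x n) • e n)
      = (2⁻¹ : ℝ) • e n := by
    intro n
    have hn := hx n
    have hn0 := hn.ne
    simp only [hquot, he, add_sub_cancel_left, hP'.add_smul_single_one hp hx_nonpos,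
      hP'.eq_zero_of_nonpos hp hx_nonpos, map_smul, norm_smul, lp.norm_single two_pos,
      norm_one, mul_one, Real.norm_eq_abs]
    rw [abs_of_pos (by linarith), abs_of_pos (by linarith), max_eq_left (by linarith),
      max_eq_right (by linarith)]
    match_scalars <;> field_simp <;> ring
  have hlim : Tendsto (fun n => (2⁻¹ : ℝ) • e n) atTop (𝓝 0) := by
    have hxne : ∀ n, x n ≠ 0 := fun n => (hx n).ne
    have h := (hA.comp (tendsto_add_smul_single_one_nhdsNE hp hxne (c := -2) (by norm_num))).sub
      (hA.comp (tendsto_add_smul_single_one_nhdsNE hp hxne (c := -1) (by norm_num)))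
    rw [sub_zero] at h
    exact h.congr hquot_sub
  have hnorm : ∀ n, ‖(2⁻¹ : ℝ) • e n‖ = 2⁻¹ := fun n => by
    rw [norm_smul, he, lp.norm_single two_pos, norm_one, mul_one, norm_inv, Real.norm_two]
  have h := tendsto_nhds_unique (hlim.norm.congr hnorm) tendsto_const_nhds
  norm_num at h
end

section
/- Let 𝕂 = {x ∈ ℓ² : xᵢ ≥ 0 for all i ∈ ℕ} be the positive cone in ℓ² with metric projection P_𝕂, and let x ∈ ℓ² satisfy xᵢ < 0 for all i ∈ ℕ. Then for every w ∈ ℓ² with w ≠ 0, the one-sided Gâteaux directional derivative of P_𝕂 at x along w exists and equals 0; that is, (P_𝕂(x + t·w) − P_𝕂(x))/t → 0 as t → 0⁺. -/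
open Filter Topology
open scoped ENNReal

/-! The projection onto the positive cone is the coordinatewise positive part `y ↦ y⁺`, being the
point of the cone satisfying the variational inequality. Hence `P x = 0` and
`t⁻¹ • P (x + t • w) = (t⁻¹ • x + w)⁺` for `t > 0`. Each coordinate of the latter vanishes as soon
as `t⁻¹ xᵢ + wᵢ < 0`, and all of them are dominated by `|wᵢ|`, so dominated convergence in `ℓ²`
gives the limit `0`; no uniformity in `i` is available since `xᵢ → 0`. -/

theorem eq_of_norm_sub_le_of_real_inner_sub_nonpos {E : Type*} [NormedAddCommGroup E]
    [InnerProductSpace ℝ E] {y p q : E} (hle : ‖y - p‖ ≤ ‖y - q‖)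
    (hq : inner ℝ (y - q) (p - q) ≤ 0) : p = q := by
  have hexpand : ‖y - p‖ ^ 2 = ‖y - q‖ ^ 2 - 2 * inner ℝ (y - q) (p - q) + ‖p - q‖ ^ 2 := by
    rw [← norm_sub_sq_real]; congr 2; abel
  have : ‖p - q‖ = 0 := by
    nlinarith [norm_nonneg (p - q), pow_le_pow_left₀ (norm_nonneg _) hle 2]
  exact sub_eq_zero.mp (norm_eq_zero.mp this)

namespace lp

variable {ι : Type*}

section DominatedConvergence

variable {α : Type*} {E : ι → Type*} [∀ i, NormedAddCommGroup (E i)] {p : ℝ≥0∞} [Fact (1 ≤ p)]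

theorem tendsto_zero_of_dominated {l : Filter α} {F : α → lp E p} {g : lp E p}
    (hp_top : p ≠ ∞) (hF : ∀ i, Tendsto (fun a => F a i) l (𝓝 0))
    (hFg : ∀ᶠ a in l, ∀ i, ‖F a i‖ ≤ ‖g i‖) : Tendsto F l (𝓝 0) := by
  have hp : 0 < p.toReal := ENNReal.toReal_pos (zero_lt_one.trans_le Fact.out).ne' hp_top
  have hsum : Tendsto (fun a => ‖F a‖ ^ p.toReal) l (𝓝 0) := by
    have h := tendsto_tsum_of_dominated_convergence (f := fun a i => ‖F a i‖ ^ p.toReal)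
      (g := fun _ => 0) ((lp.memℓp g).summable hp)
      (fun i => by simpa [Real.zero_rpow hp.ne'] using (hF i).norm.rpow_const (Or.inr hp.le))
      (hFg.mono fun a ha i => by
        rw [Real.norm_of_nonneg (by positivity)]
        exact Real.rpow_le_rpow (norm_nonneg _) (ha i) hp.le)
    simpa only [tsum_zero, ← norm_rpow_eq_tsum hp] using h
  rw [tendsto_zero_iff_norm_tendsto_zero]
  have := (Real.continuousAt_rpow_const 0 p.toReal⁻¹ (Or.inr (inv_pos.2 hp).le)).tendsto.comp hsum
  simpa [Function.comp_def, Real.zero_rpow (inv_pos.2 hp).ne',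
    Real.rpow_rpow_inv (norm_nonneg _) hp.ne'] using this

end DominatedConvergence

variable {p : ℝ≥0∞}

def posPart (y : lp (fun _ : ι => ℝ) p) : lp (fun _ : ι => ℝ) p :=
  ⟨fun i => max (y i) 0, (lp.memℓp y).mono' fun i => by
    simp only [Real.norm_eq_abs]; exact abs_max_le_max_abs_abs.trans (by simp)⟩

@[simp]
theorem posPart_apply (y : lp (fun _ : ι => ℝ) p) (i : ι) : posPart y i = max (y i) 0 := rfl

theorem posPart_nonneg (y : lp (fun _ : ι => ℝ) p) (i : ι) : 0 ≤ posPart y i := le_max_right _ _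

theorem posPart_eq_zero {y : lp (fun _ : ι => ℝ) p} (hy : ∀ i, y i ≤ 0) : posPart y = 0 :=
  lp.ext <| funext fun i => max_eq_right (hy i)

theorem posPart_smul {c : ℝ} (hc : 0 ≤ c) (y : lp (fun _ : ι => ℝ) p) :
    posPart (c • y) = c • posPart y :=
  lp.ext <| funext fun i => by simp [mul_max_of_nonneg _ _ hc]

theorem real_inner_sub_posPart_sub_posPart_nonpos (y z : lp (fun _ : ι => ℝ) 2)
    (hz : ∀ i, 0 ≤ z i) : inner ℝ (y - posPart y) (z - posPart y) ≤ 0 := by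
  rw [inner_eq_tsum]
  refine tsum_nonpos fun i => ?_
  simp only [coeFn_sub, Pi.sub_apply, posPart_apply, RCLike.inner_apply]
  rcases le_total (y i) 0 with h | h
  · simpa [max_eq_right h] using mul_nonpos_of_nonneg_of_nonpos (hz i) h
  · simp [max_eq_left h]

theorem eq_posPart_of_forall_norm_sub_le (y q : lp (fun _ : ι => ℝ) 2) (hq : ∀ i, 0 ≤ q i)
    (hmin : ∀ z : lp (fun _ : ι => ℝ) 2, (∀ i, 0 ≤ z i) → ‖y - q‖ ≤ ‖y - z‖) :
    q = posPart y :=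
  eq_of_norm_sub_le_of_real_inner_sub_nonpos (hmin _ (posPart_nonneg y))
    (real_inner_sub_posPart_sub_posPart_nonpos y q hq)

theorem tendsto_posPart_inv_smul_add [Fact (1 ≤ p)] {x : lp (fun _ : ι => ℝ) p} (hp : p ≠ ∞)
    (hx : ∀ i, x i < 0) (w : lp (fun _ : ι => ℝ) p) :
    Tendsto (fun t : ℝ => posPart (t⁻¹ • x + w)) (𝓝[>] 0) (𝓝 0) := by
  refine tendsto_zero_of_dominated (g := w) hp (fun i => ?_) ?_
  · have hbot : Tendsto (fun t : ℝ => t⁻¹ * x i + w i) (𝓝[>] 0) atBot :=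
      tendsto_atBot_add_const_right _ _ (tendsto_inv_nhdsGT_zero.atTop_mul_const_of_neg (hx i))
    refine tendsto_const_nhds.congr' ((hbot.eventually_lt_atBot 0).mono fun t ht => ?_)
    simp only [posPart_apply, coeFn_add, coeFn_smul, Pi.add_apply, Pi.smul_apply, smul_eq_mul]
    exact (max_eq_right ht.le).symm
  · filter_upwards [self_mem_nhdsWithin] with t (ht : 0 < t) i
    have hxt : t⁻¹ * x i ≤ 0 := mul_nonpos_of_nonneg_of_nonpos (inv_nonneg.2 ht.le) (hx i).le
    simp only [posPart_apply, coeFn_add, coeFn_smul, Pi.add_apply, Pi.smul_apply, smul_eq_mul,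
      Real.norm_eq_abs]
    rw [abs_of_nonneg (le_max_right _ _)]
    exact max_le (by linarith [le_abs_self (w i)]) (abs_nonneg _)

theorem tendsto_inv_smul_posPart_add_smul [Fact (1 ≤ p)] {x : lp (fun _ : ι => ℝ) p} (hp : p ≠ ∞)
    (hx : ∀ i, x i < 0) (w : lp (fun _ : ι => ℝ) p) :
    Tendsto (fun t : ℝ => t⁻¹ • posPart (x + t • w)) (𝓝[>] 0) (𝓝 0) := by
  refine (tendsto_posPart_inv_smul_add hp hx w).congr' ?_
  filter_upwards [self_mem_nhdsWithin] with t (ht : 0 < t)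
  rw [← posPart_smul (inv_nonneg.2 ht.le), smul_add, smul_smul, inv_mul_cancel₀ ht.ne', one_smul]

end lp

/-- Let `P` be the metric projection onto the positive cone `𝕂` of `ℓ²` and let `x` have
all coordinates strictly negative.  Then for every nonzero `w`, the one-sided Gâteaux
directional derivative of `P` at `x` along `w` exists and equals `0`. -/
theorem gateaux_proj_positiveCone_lp2_neg
    (P : lp (fun _ : ℕ => ℝ) 2 → lp (fun _ : ℕ => ℝ) 2)
    (hP : ∀ x, (∀ i : ℕ, 0 ≤ P x i) ∧
      ∀ z : lp (fun _ : ℕ => ℝ) 2, (∀ i : ℕ, 0 ≤ z i) → ‖x - P x‖ ≤ ‖x - z‖)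
    (x : lp (fun _ : ℕ => ℝ) 2) (hx : ∀ i : ℕ, x i < 0) :
    ∀ w : lp (fun _ : ℕ => ℝ) 2, w ≠ 0 →
      Filter.Tendsto (fun t : ℝ => t⁻¹ • (P (x + t • w) - P x)) (𝓝[>] (0 : ℝ))
        (𝓝 0) := by
  intro w _
  have hP_eq : ∀ y, P y = lp.posPart y := fun y =>
    lp.eq_posPart_of_forall_norm_sub_le y (P y) (hP y).1 (hP y).2
  have hPx : P x = 0 := by rw [hP_eq, lp.posPart_eq_zero fun i => (hx i).le]
  simpa [hPx, hP_eq] using lp.tendsto_inv_smul_posPart_add_smul ENNReal.ofNat_ne_top hx w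
end
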